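/- In a projective space P with horizon W satisfying the size condition, every proper plane (a plane not contained in W) contains a proper triangle, i.e. three pairwise collinear points not on a common line such that all three vertices and all three sides are proper. -/

import Mathlib

/-- A projective space of dimension at least 3, given by its point set `S` and its
set of lines: any two points lie on a unique line, the Veblen (Pasch) axiom holds,
and there exist two disjoint lines (dimension ≥ 3). -/
structure ProjSpace (S : Type*) where
  L : Set (Set S)
  two_points : ∀ k ∈ L, ∃ a ∈ k, ∃ b ∈ k, a ≠ b
  unique_meet : ∀ k ∈ L, ∀ l ∈ L, k ≠ l → (k ∩ l).Subsingleton
  join : ∀ a b : S, a ≠ b → ∃ k ∈ L, a ∈ k ∧ b ∈ k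
  veblen : ∀ l₁ ∈ L, ∀ l₂ ∈ L, ∀ l₃ ∈ L, ∀ l₄ ∈ L, ∀ p a b c d : S,
    l₁ ≠ l₂ → p ≠ a → p ≠ b → p ≠ c → p ≠ d →
    p ∈ l₁ → a ∈ l₁ → c ∈ l₁ → p ∈ l₂ → b ∈ l₂ → d ∈ l₂ →
    a ∈ l₃ → b ∈ l₃ → c ∈ l₄ → d ∈ l₄ → (l₃ ∩ l₄).Nonempty
  dim3 : ∃ k ∈ L, ∃ l ∈ L, k ∩ l = ∅

namespace ProjSpace

variable {S : Type*}

/-- A subspace: any line through two of its points is contained in it. -/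
def IsSubspace (P : ProjSpace S) (X : Set S) : Prop :=
  ∀ k ∈ P.L, ∀ a ∈ k, ∀ b ∈ k, a ≠ b → a ∈ X → b ∈ X → k ⊆ X

/-- The subspace spanned by a point set. -/
def span (P : ProjSpace S) (X : Set S) : Set S :=
  ⋂₀ {Y | P.IsSubspace Y ∧ X ⊆ Y}

/-- A plane: the span of a line together with a point outside it. -/
def IsPlane (P : ProjSpace S) (Pl : Set S) : Prop :=
  ∃ k ∈ P.L, ∃ a, a ∉ k ∧ Pl = P.span (insert a k)

/-- `HasIndex P W lam`: some line has exactly `lam` points in `W` and every line not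
contained in `W` has at most `lam` points in `W`. -/
def HasIndex (P : ProjSpace S) (W : Set S) (lam : ℕ) : Prop :=
  (∃ k ∈ P.L, (k ∩ W).encard = (lam : ℕ∞)) ∧
    ∀ k ∈ P.L, ¬ k ⊆ W → (k ∩ W).encard ≤ (lam : ℕ∞)

/-- Three lines form a triangle: pairwise distinct, pairwise intersecting,
not concurrent. -/
def LineTriangle (P : ProjSpace S) (k₁ k₂ k₃ : Set S) : Prop :=
  k₁ ∈ P.L ∧ k₂ ∈ P.L ∧ k₃ ∈ P.L ∧ k₁ ≠ k₂ ∧ k₁ ≠ k₃ ∧ k₂ ≠ k₃ ∧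
    (k₁ ∩ k₂).Nonempty ∧ (k₁ ∩ k₃).Nonempty ∧ (k₂ ∩ k₃).Nonempty ∧
    ¬ (k₁ ∩ k₂ ∩ k₃).Nonempty

/-- Parallelism w.r.t. the horizon `W`: the lines meet, and only inside `W`. -/
def Par (W : Set S) (k₁ k₂ : Set S) : Prop :=
  (k₁ ∩ k₂).Nonempty ∧ k₁ ∩ k₂ ⊆ W

end ProjSpace

/-!
Take a point `x` of the plane outside `W`. Two distinct lines of the plane pass through `x`;
neither lies in `W`, so by the size condition each carries at least `2λ + 2 - λ ≥ 2` points
outside `W`, hence a point `b`, resp. `c`, outside `W` other than `x`. The points `x, b, c`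
are not collinear, and every side of the triangle contains a vertex outside `W`.
-/

namespace ProjSpace

variable {S : Type*} (P : ProjSpace S)

theorem eq_of_mem_of_mem {k l : Set S} {a b : S} (hk : k ∈ P.L) (hl : l ∈ P.L)
    (hak : a ∈ k) (hbk : b ∈ k) (hal : a ∈ l) (hbl : b ∈ l) (hab : a ≠ b) : k = l := by
  by_contra h
  exact hab (P.unique_meet k hk l hl h ⟨hak, hal⟩ ⟨hbk, hbl⟩)

theorem exists_mem_ne {k : Set S} (hk : k ∈ P.L) (x : S) : ∃ w ∈ k, w ≠ x := by
  obtain ⟨u, hu, v, hv, huv⟩ := P.two_points k hk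
  by_cases hux : u = x
  · exact ⟨v, hv, fun hvx => huv (hux.trans hvx.symm)⟩
  · exact ⟨u, hu, hux⟩

theorem isSubspace_span (X : Set S) : P.IsSubspace (P.span X) :=
  fun k hk a ha b hb hab haX hbX _ hp Y hY => hY.1 k hk a ha b hb hab (haX Y hY) (hbX Y hY) hp

theorem subset_span (X : Set S) : X ⊆ P.span X :=
  fun _ hx _ hY => hY.2 hx

variable {P}

theorem IsSubspace.exists_line_subset_not_mem {X k₀ : Set S} {a₀ : S} (hX : P.IsSubspace X)
    (hk₀ : k₀ ∈ P.L) (hk₀X : k₀ ⊆ X) (ha₀X : a₀ ∈ X) (ha₀ : a₀ ∉ k₀) (x : S) :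
    ∃ k ∈ P.L, k ⊆ X ∧ x ∉ k := by
  by_cases hx : x ∈ k₀
  · obtain ⟨w, hw, hwx⟩ := P.exists_mem_ne hk₀ x
    have ha₀w : a₀ ≠ w := fun h => ha₀ (h ▸ hw)
    obtain ⟨k, hk, ha₀k, hwk⟩ := P.join a₀ w ha₀w
    refine ⟨k, hk, hX k hk a₀ ha₀k w hwk ha₀w ha₀X (hk₀X hw), fun hxk => ha₀ ?_⟩
    rwa [P.eq_of_mem_of_mem hk hk₀ hxk hwk hx hw hwx.symm] at ha₀k
  · exact ⟨k₀, hk₀, hk₀X, hx⟩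

theorem IsSubspace.exists_ne_lines_through {X k : Set S} {x : S} (hX : P.IsSubspace X)
    (hk : k ∈ P.L) (hkX : k ⊆ X) (hxX : x ∈ X) (hxk : x ∉ k) :
    ∃ m₁ ∈ P.L, ∃ m₂ ∈ P.L, m₁ ≠ m₂ ∧ x ∈ m₁ ∧ x ∈ m₂ ∧ m₁ ⊆ X ∧ m₂ ⊆ X := by
  obtain ⟨u, hu, v, hv, huv⟩ := P.two_points k hk
  have hxu : x ≠ u := fun h => hxk (h ▸ hu)
  have hxv : x ≠ v := fun h => hxk (h ▸ hv)
  obtain ⟨m₁, hm₁, hxm₁, hum₁⟩ := P.join x u hxu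
  obtain ⟨m₂, hm₂, hxm₂, hvm₂⟩ := P.join x v hxv
  refine ⟨m₁, hm₁, m₂, hm₂, fun h => hxk ?_, hxm₁, hxm₂,
    hX m₁ hm₁ x hxm₁ u hum₁ hxu hxX (hkX hu), hX m₂ hm₂ x hxm₂ v hvm₂ hxv hxX (hkX hv)⟩
  rwa [P.eq_of_mem_of_mem hm₁ hk hum₁ (h ▸ hvm₂) hu hv huv] at hxm₁

theorem IsPlane.exists_ne_lines_through {Pl : Set S} {x : S} (hPl : P.IsPlane Pl)
    (hx : x ∈ Pl) :
    ∃ m₁ ∈ P.L, ∃ m₂ ∈ P.L, m₁ ≠ m₂ ∧ x ∈ m₁ ∧ x ∈ m₂ ∧ m₁ ⊆ Pl ∧ m₂ ⊆ Pl := by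
  obtain ⟨k₀, hk₀, a₀, ha₀, rfl⟩ := hPl
  have hsub := P.isSubspace_span (insert a₀ k₀)
  have hspan := P.subset_span (insert a₀ k₀)
  obtain ⟨k, hk, hkPl, hxk⟩ := hsub.exists_line_subset_not_mem hk₀
    ((Set.subset_insert a₀ k₀).trans hspan) (hspan (Set.mem_insert a₀ k₀)) ha₀ x
  exact hsub.exists_ne_lines_through hk hkPl hx hxk

theorem one_lt_encard_diff_of_not_subset {W l : Set S} {lam : ℕ} (hind : P.HasIndex W lam)
    (hsize : ∀ k ∈ P.L, 2 * (lam : ℕ∞) + 2 ≤ k.encard) (hl : l ∈ P.L) (hlW : ¬ l ⊆ W) :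
    1 < (l \ W).encard := by
  by_contra! h
  have : 2 * (lam : ℕ∞) + 2 ≤ 1 + lam :=
    calc 2 * (lam : ℕ∞) + 2 ≤ l.encard := hsize l hl
      _ = (l \ W).encard + (l ∩ W).encard := (Set.encard_sdiff_add_encard_inter l W).symm
      _ ≤ 1 + lam := add_le_add h (hind.2 l hl hlW)
  norm_cast at this
  omega

theorem not_collinear_of_mem_ne_lines {m₁ m₂ : Set S} {x b c : S} (hm₁ : m₁ ∈ P.L)
    (hm₂ : m₂ ∈ P.L) (hm : m₁ ≠ m₂) (hxm₁ : x ∈ m₁) (hxm₂ : x ∈ m₂) (hbm₁ : b ∈ m₁)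
    (hcm₂ : c ∈ m₂) (hbx : b ≠ x) (hcx : c ≠ x) : ∀ l ∈ P.L, ¬ (x ∈ l ∧ b ∈ l ∧ c ∈ l) := by
  rintro l hl ⟨hxl, hbl, hcl⟩
  exact hm ((P.eq_of_mem_of_mem hl hm₁ hxl hbl hxm₁ hbm₁ hbx.symm).symm.trans
    (P.eq_of_mem_of_mem hl hm₂ hxl hcl hxm₂ hcm₂ hcx.symm))

end ProjSpace

open ProjSpace in
theorem proper_triangle_on_proper_plane_general {S : Type*} (P : ProjSpace S) (W : Set S)
    (lam : ℕ) (hind : P.HasIndex W lam)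
    (hsize : ∀ k ∈ P.L, 2 * (lam : ℕ∞) + 2 ≤ k.encard)
    (Pl : Set S) (hPl : P.IsPlane Pl) (hprop : ¬ Pl ⊆ W) :
    ∃ a b c : S, a ∈ Pl ∧ b ∈ Pl ∧ c ∈ Pl ∧
      a ∉ W ∧ b ∉ W ∧ c ∉ W ∧ a ≠ b ∧ a ≠ c ∧ b ≠ c ∧
      (∀ l ∈ P.L, ¬ (a ∈ l ∧ b ∈ l ∧ c ∈ l)) ∧
      (∀ l ∈ P.L, ((a ∈ l ∧ b ∈ l) ∨ (a ∈ l ∧ c ∈ l) ∨ (b ∈ l ∧ c ∈ l)) →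
        ¬ l ⊆ W) := by
  obtain ⟨x, hxPl, hxW⟩ := Set.not_subset.mp hprop
  obtain ⟨m₁, hm₁, m₂, hm₂, hm, hxm₁, hxm₂, hm₁Pl, hm₂Pl⟩ := hPl.exists_ne_lines_through hxPl
  obtain ⟨b, ⟨hbm₁, hbW⟩, hbx⟩ := Set.exists_ne_of_one_lt_encard
    (one_lt_encard_diff_of_not_subset hind hsize hm₁ fun h => hxW (h hxm₁)) x
  obtain ⟨c, ⟨hcm₂, hcW⟩, hcx⟩ := Set.exists_ne_of_one_lt_encard
    (one_lt_encard_diff_of_not_subset hind hsize hm₂ fun h => hxW (h hxm₂)) x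
  have hxbc := not_collinear_of_mem_ne_lines hm₁ hm₂ hm hxm₁ hxm₂ hbm₁ hcm₂ hbx hcx
  have hbc : b ≠ c := by
    rintro rfl
    exact hxbc m₁ hm₁ ⟨hxm₁, hbm₁, hbm₁⟩
  refine ⟨x, b, c, hxPl, hm₁Pl hbm₁, hm₂Pl hcm₂, hxW, hbW, hcW, hbx.symm, hcx.symm, hbc, hxbc,
    ?_⟩
  rintro l - (⟨hxl, -⟩ | ⟨hxl, -⟩ | ⟨hbl, -⟩) hlW
  exacts [hxW (hlW hxl), hxW (hlW hxl), hbW (hlW hbl)]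

open ProjSpace in
/-- every proper plane contains a proper triangle: three pairwise distinct
proper points of the plane not on a common line, all lines through two of them being
proper. -/
theorem proper_triangle_on_proper_plane {S : Type*} (P : ProjSpace S) (W : Set S)
    (lam : ℕ) (hlam : 0 < lam) (hind : P.HasIndex W lam)
    (hsize : ∀ k ∈ P.L, 2 * (lam : ℕ∞) + 2 ≤ k.encard)
    (Pl : Set S) (hPl : P.IsPlane Pl) (hprop : ¬ Pl ⊆ W) :
    ∃ a b c : S, a ∈ Pl ∧ b ∈ Pl ∧ c ∈ Pl ∧
      a ∉ W ∧ b ∉ W ∧ c ∉ W ∧ a ≠ b ∧ a ≠ c ∧ b ≠ c ∧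
      (∀ l ∈ P.L, ¬ (a ∈ l ∧ b ∈ l ∧ c ∈ l)) ∧
      (∀ l ∈ P.L, ((a ∈ l ∧ b ∈ l) ∨ (a ∈ l ∧ c ∈ l) ∨ (b ∈ l ∧ c ∈ l)) →
        ¬ l ⊆ W) :=
  proper_triangle_on_proper_plane_general P W lam hind hsize Pl hPl hprop
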